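/- Let A be an Arens regular Banach algebra, X a Banach A-bimodule, and D : A → X* a surjective derivation. Then the double adjoint D'' : A** → X*** is a derivation (with respect to the first Arens product and the canonical A**-bimodule structure on X***) if and only if for every x'' in X**, the map F ↦ x''·F from A** to X** is weak*-to-weak continuous. -/

import Mathlib

/-!
Unwinding the Arens products, the derivation identity for `D''` at `(F, G)`, paired with `x''`,
reduces by the derivation identity for `D` to `⟨D''G, x''·F⟩ = ⟨F, a ↦ ⟨D''G, x''·a⟩⟩`.
As `D` maps the Banach space `A` onto `X*`, the open mapping theorem bounds `D'` below, so by
Hahn–Banach `D''` maps onto `X***`. The condition therefore says that for every `Θ ∈ X***` the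
functional `F ↦ ⟨Θ, x''·F⟩` on `A**` is evaluation at an element of `A*`, that is, it is
weak*-continuous; and this for all `Θ` is the weak*-to-weak continuity of `F ↦ x''·F`.
-/

open NormedSpace ContinuousLinearMap Filter

noncomputable section

namespace NormedSpace

/-- The topological dual of a seminormed space `E` (as `NormedSpace.Dual` was defined in the
older Mathlib: a `def` equal to `E →L[𝕜] 𝕜`, carrying the operator-norm instances). -/
def Dual (𝕜 : Type*) [NontriviallyNormedField 𝕜] (E : Type*) [SeminormedAddCommGroup E]
    [NormedSpace 𝕜 E] : Type _ :=
  E →L[𝕜] 𝕜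

instance (𝕜 : Type*) [NontriviallyNormedField 𝕜] (E : Type*) [NormedAddCommGroup E]
    [NormedSpace 𝕜 E] : NormedAddCommGroup (Dual 𝕜 E) :=
  ContinuousLinearMap.toNormedAddCommGroup

instance (𝕜 : Type*) [NontriviallyNormedField 𝕜] (E : Type*) [NormedAddCommGroup E]
    [NormedSpace 𝕜 E] : NormedSpace 𝕜 (Dual 𝕜 E) :=
  ContinuousLinearMap.toNormedSpace

instance (𝕜 : Type*) [NontriviallyNormedField 𝕜] (E : Type*) [NormedAddCommGroup E]
    [NormedSpace 𝕜 E] : FunLike (Dual 𝕜 E) E 𝕜 :=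
  ContinuousLinearMap.funLike

instance (𝕜 : Type*) [NontriviallyNormedField 𝕜] (E : Type*) [NormedAddCommGroup E]
    [NormedSpace 𝕜 E] : ContinuousLinearMapClass (Dual 𝕜 E) 𝕜 E 𝕜 :=
  ContinuousLinearMap.continuousSemilinearMapClass

instance (𝕜 : Type*) [NontriviallyNormedField 𝕜] (E : Type*) [NormedAddCommGroup E]
    [NormedSpace 𝕜 E] : Inhabited (Dual 𝕜 E) :=
  ⟨0⟩

instance (𝕜 : Type*) [NontriviallyNormedField 𝕜] (E : Type*) [NormedAddCommGroup E]
    [NormedSpace 𝕜 E] [CompleteSpace 𝕜] : CompleteSpace (Dual 𝕜 E) :=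
  inferInstanceAs (CompleteSpace (E →L[𝕜] 𝕜))

end NormedSpace

/-- The adjoint (dual map) of a continuous linear map: `dMap T φ = φ ∘ T`. -/
def dMap {E F : Type*} [NormedAddCommGroup E] [NormedSpace ℝ E]
    [NormedAddCommGroup F] [NormedSpace ℝ F] (T : E →L[ℝ] F) :
    Dual ℝ F →L[ℝ] Dual ℝ E :=
  (ContinuousLinearMap.compL ℝ E F ℝ).flip T

/-- The double adjoint of a continuous linear map. -/
def ddMap {E F : Type*} [NormedAddCommGroup E] [NormedSpace ℝ E]
    [NormedAddCommGroup F] [NormedSpace ℝ F] (T : E →L[ℝ] F) :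
    Dual ℝ (Dual ℝ E) →L[ℝ] Dual ℝ (Dual ℝ F) :=
  dMap (dMap T)

/-- The (first, left) Arens extension of a bounded bilinear map `m : E × F → G` to the
biduals, via the classical three steps:
`⟨g'·e, f⟩ = ⟨g', m e f⟩`, `⟨Ψ·g', e⟩ = ⟨Ψ, g'·e⟩`, `⟨arensExt m Φ Ψ, g'⟩ = ⟨Φ, Ψ·g'⟩`. -/
def arensExt {E F G : Type*} [NormedAddCommGroup E] [NormedSpace ℝ E]
    [NormedAddCommGroup F] [NormedSpace ℝ F] [NormedAddCommGroup G] [NormedSpace ℝ G]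
    (m : E →L[ℝ] F →L[ℝ] G) :
    Dual ℝ (Dual ℝ E) →L[ℝ] Dual ℝ (Dual ℝ F) →L[ℝ] Dual ℝ (Dual ℝ G) :=
  let s1 : E →L[ℝ] (Dual ℝ G →L[ℝ] Dual ℝ F) :=
    ((ContinuousLinearMap.compL ℝ F G ℝ).flip).comp m
  let s2 : Dual ℝ G →L[ℝ] (Dual ℝ (Dual ℝ F) →L[ℝ] Dual ℝ E) :=
    ((ContinuousLinearMap.compL ℝ E (Dual ℝ F) ℝ).flip).comp s1.flip
  (((ContinuousLinearMap.compL ℝ (Dual ℝ G) (Dual ℝ E) ℝ).flip).comp s2.flip).flip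

/-- The first Arens product on the bidual of a (possibly non-unital) Banach algebra:
`⟨F G, a'⟩ = ⟨F, G·a'⟩` where `⟨G·a', a⟩ = ⟨G, a'·a⟩` and `⟨a'·a, b⟩ = ⟨a', a*b⟩`. -/
def arens1 (A : Type*) [NonUnitalNormedRing A] [NormedSpace ℝ A]
    [IsScalarTower ℝ A A] [SMulCommClass ℝ A A] :
    Dual ℝ (Dual ℝ A) →L[ℝ] Dual ℝ (Dual ℝ A) →L[ℝ] Dual ℝ (Dual ℝ A) :=
  arensExt (ContinuousLinearMap.mul ℝ A)

/-- The second Arens product on the bidual of a (possibly non-unital) Banach algebra: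
`⟨F ∘ G, a'⟩ = ⟨G, a'∘F⟩` where `⟨a'∘F, a⟩ = ⟨F, a∘a'⟩` and `⟨a∘a', b⟩ = ⟨a', b*a⟩`. -/
def arens2 (A : Type*) [NonUnitalNormedRing A] [NormedSpace ℝ A]
    [IsScalarTower ℝ A A] [SMulCommClass ℝ A A] :
    Dual ℝ (Dual ℝ A) →L[ℝ] Dual ℝ (Dual ℝ A) →L[ℝ] Dual ℝ (Dual ℝ A) :=
  (arensExt ((ContinuousLinearMap.mul ℝ A).flip)).flip

/-- `f`, a map from a dual space to a normed space, is weak-star-to-weak continuous. -/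
def WstarToWeakContinuous {E F : Type*} [NormedAddCommGroup E] [NormedSpace ℝ E]
    [NormedAddCommGroup F] [NormedSpace ℝ F]
    (f : Dual ℝ E → F) : Prop :=
  Continuous fun x : WeakDual ℝ E => toWeakSpace ℝ F (f x)
variable {A : Type*} [NonUnitalNormedRing A] [NormedSpace ℝ A]
  [IsScalarTower ℝ A A] [SMulCommClass ℝ A A] [CompleteSpace A]
variable {X : Type*} [NormedAddCommGroup X] [NormedSpace ℝ X] [CompleteSpace X]

open Function

section Duality

variable {E F : Type*} [NormedAddCommGroup E] [NormedSpace ℝ E]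
  [NormedAddCommGroup F] [NormedSpace ℝ F]

theorem antilipschitz_dMap_of_surjective [CompleteSpace E] [CompleteSpace F] {T : E →L[ℝ] F}
    (hT : Surjective T) : ∃ K, AntilipschitzWith K (dMap T) := by
  obtain ⟨C, hC, hpre⟩ := T.exists_preimage_norm_le hT
  refine ⟨C.toNNReal, (dMap T).antilipschitz_of_bound fun φ => ?_⟩
  rw [Real.coe_toNNReal C hC.le]
  refine φ.opNorm_le_bound (by positivity) fun y => ?_
  obtain ⟨x, rfl, hx⟩ := hpre y
  calc ‖φ (T x)‖ = ‖dMap T φ x‖ := rfl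
    _ ≤ ‖dMap T φ‖ * ‖x‖ := (dMap T φ).le_opNorm x
    _ ≤ ‖dMap T φ‖ * (C * ‖T x‖) := by gcongr
    _ = C * ‖dMap T φ‖ * ‖T x‖ := by ring

theorem dMap_surjective_of_injective_of_isClosed_range [CompleteSpace E] [CompleteSpace F]
    {S : E →L[ℝ] F} (hinj : Injective S) (hclo : IsClosed (Set.range S)) : Surjective (dMap S) := by
  intro φ
  obtain ⟨ψ, hψ, -⟩ :=
    exists_extension_norm_eq _ (φ.comp (S.equivRange hinj hclo).symm.toContinuousLinearMap)
  refine ⟨ψ, DFunLike.ext _ _ fun x => ?_⟩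
  calc dMap S ψ x = ψ (S x) := rfl
    _ = φ ((S.equivRange hinj hclo).symm ⟨S x, S.mem_range_self x⟩) :=
      hψ ⟨S x, S.mem_range_self x⟩
    _ = φ x := by rw [S.equivRange_symm_apply]

theorem ddMap_surjective [CompleteSpace E] [CompleteSpace F] {T : E →L[ℝ] F}
    (hT : Surjective T) : Surjective (ddMap T) := by
  obtain ⟨K, hK⟩ := antilipschitz_dMap_of_surjective hT
  exact dMap_surjective_of_injective_of_isClosed_range hK.injective
    (hK.isClosed_range (dMap T).uniformContinuous)

end Duality

section WeakStar

variable {E F : Type*} [NormedAddCommGroup E] [NormedSpace ℝ E]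
  [NormedAddCommGroup F] [NormedSpace ℝ F]

theorem continuous_weakDual_iff_exists_eq_apply (Λ : Dual ℝ E →L[ℝ] ℝ) :
    (Continuous fun φ : WeakDual ℝ E => Λ φ) ↔ ∃ x : E, ∀ φ : Dual ℝ E, Λ φ = φ x := by
  constructor
  · intro hΛ
    obtain ⟨x, hx⟩ := LinearMap.dualEmbedding_surjective (topDualPairing ℝ E)
      ⟨(Λ : Dual ℝ E →ₗ[ℝ] ℝ), hΛ⟩
    exact ⟨x, fun φ => (DFunLike.congr_fun hx φ).symm⟩
  · rintro ⟨x, hx⟩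
    exact (WeakDual.eval_continuous (𝕜 := ℝ) x).congr fun φ => (hx φ).symm

theorem wstarToWeakContinuous_iff_forall_exists_eq_apply (R : Dual ℝ E →L[ℝ] F) :
    WstarToWeakContinuous R ↔ ∀ Θ : Dual ℝ F, ∃ x : E, ∀ φ : Dual ℝ E, Θ (R φ) = φ x := by
  refine ⟨fun hR Θ => (continuous_weakDual_iff_exists_eq_apply (dMap R Θ)).1 ?_, fun h => ?_⟩
  · have hΘ : Continuous fun v : WeakSpace ℝ F => (topDualPairing ℝ F).flip v Θ :=
      WeakBilin.eval_continuous _ Θ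
    exact hΘ.comp hR
  · exact WeakBilin.continuous_of_continuous_eval _ fun Θ =>
      (continuous_weakDual_iff_exists_eq_apply (dMap R Θ)).2 (h Θ)

theorem exists_eq_apply_iff_eq_apply_dMap_inclusion (Λ : Dual ℝ (Dual ℝ (Dual ℝ E))) :
    (∃ x' : Dual ℝ E, ∀ Φ : Dual ℝ (Dual ℝ E), Λ Φ = Φ x') ↔
      ∀ Φ : Dual ℝ (Dual ℝ E), Λ Φ = Φ (dMap (inclusionInDoubleDual ℝ E) Λ) := by
  refine ⟨fun ⟨x', hx'⟩ => ?_, fun h => ⟨_, h⟩⟩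
  suffices dMap (inclusionInDoubleDual ℝ E) Λ = x' by rwa [this]
  exact DFunLike.ext _ _ fun x => hx' (inclusionInDoubleDual ℝ E x)

theorem wstarToWeakContinuous_iff (R : Dual ℝ (Dual ℝ E) →L[ℝ] F) :
    WstarToWeakContinuous R ↔ ∀ (Θ : Dual ℝ F) (Φ : Dual ℝ (Dual ℝ E)),
      Θ (R Φ) = Φ (dMap (inclusionInDoubleDual ℝ E) (dMap R Θ)) := by
  simp only [wstarToWeakContinuous_iff_forall_exists_eq_apply]
  exact forall_congr' fun Θ => exists_eq_apply_iff_eq_apply_dMap_inclusion (dMap R Θ)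

end WeakStar

section ArensDerivation

variable {A : Type*} [NonUnitalNormedRing A] [NormedSpace ℝ A] [IsScalarTower ℝ A A]
  [SMulCommClass ℝ A A] {X : Type*} [NormedAddCommGroup X] [NormedSpace ℝ X]

theorem ddMap_arens1_apply (l r : A →L[ℝ] X →L[ℝ] X) (D : A →L[ℝ] Dual ℝ X)
    (hD : ∀ a b : A, D (a * b) = dMap (r a) (D b) + dMap (l b) (D a))
    (F G : Dual ℝ (Dual ℝ A)) (x'' : Dual ℝ (Dual ℝ X)) :
    ddMap D (arens1 A F G) x'' =
      F (dMap (inclusionInDoubleDual ℝ A) (dMap (arensExt r.flip x'') (ddMap D G))) +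
        ddMap D F (arensExt l G x'') := by
  -- both sides unfold to `⟨F, a ↦ ⟨G, b ↦ ⟨x'', D (a * b)⟩⟩⟩`, which `hD` splits
  refine (congrArg F (DFunLike.ext _ _ fun a => ?_)).trans (map_add F _ _)
  refine (congrArg G (DFunLike.ext _ _ fun b => ?_)).trans (map_add G _ _)
  exact (congrArg x'' (hD a b)).trans (map_add x'' _ _)

theorem ddMap_derivation_iff (l r : A →L[ℝ] X →L[ℝ] X) (D : A →L[ℝ] Dual ℝ X)
    (hD : ∀ a b : A, D (a * b) = dMap (r a) (D b) + dMap (l b) (D a)) :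
    (∀ F G : Dual ℝ (Dual ℝ A),
      ddMap D (arens1 A F G) =
        dMap ((arensExt r.flip).flip F) (ddMap D G) + dMap (arensExt l G) (ddMap D F)) ↔
    ∀ (F G : Dual ℝ (Dual ℝ A)) (x'' : Dual ℝ (Dual ℝ X)),
      ddMap D G (arensExt r.flip x'' F) =
        F (dMap (inclusionInDoubleDual ℝ A) (dMap (arensExt r.flip x'') (ddMap D G))) := by
  refine forall₂_congr fun F G => ?_
  rw [DFunLike.ext_iff]
  refine forall_congr' fun x'' => ?_
  have hsum : (dMap ((arensExt r.flip).flip F) (ddMap D G) + dMap (arensExt l G) (ddMap D F)) x''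
      = ddMap D G (arensExt r.flip x'' F) + ddMap D F (arensExt l G x'') := rfl
  rw [ddMap_arens1_apply l r D hD, hsum]
  exact (add_left_inj _).trans eq_comm

end ArensDerivation

theorem bidual_derivation_iff_wstarw_general
    -- `l` is the left action, `r a x = x · a` is the right action of the bimodule `X`
    (l r : A →L[ℝ] X →L[ℝ] X)
    (D : A →L[ℝ] Dual ℝ X)
    (hD : ∀ a b : A, D (a * b) = dMap (r a) (D b) + dMap (l b) (D a))
    (hsurj : Function.Surjective D) :
    (∀ F G : Dual ℝ (Dual ℝ A),
      ddMap D (arens1 A F G) =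
        dMap ((arensExt r.flip).flip F) (ddMap D G) + dMap (arensExt l G) (ddMap D F)) ↔
    (∀ x'' : Dual ℝ (Dual ℝ X),
      WstarToWeakContinuous fun F : Dual ℝ (Dual ℝ A) => arensExt r.flip x'' F) := by
  rw [ddMap_derivation_iff l r D hD]
  simp only [wstarToWeakContinuous_iff, (ddMap_surjective hsurj).forall]
  exact ⟨fun h x'' G F => h F G x'', fun h F G x'' => h x'' G F⟩

/-- For an Arens regular Banach algebra `A` and a surjective derivation `D : A → X*`, the
double adjoint `D'' : A** → X***` is a derivation if and only if for every `x'' ∈ X**`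
the map `F ↦ x''·F` is weak-star-to-weak continuous. -/
theorem bidual_derivation_iff_wstarw
    -- `l` is the left action, `r a x = x · a` is the right action of the bimodule `X`
    (l r : A →L[ℝ] X →L[ℝ] X)
    (hl : ∀ a b : A, l (a * b) = (l a).comp (l b))
    (hr : ∀ a b : A, r (a * b) = (r b).comp (r a))
    (hc : ∀ a b : A, (l a).comp (r b) = (r b).comp (l a))
    (hreg : ∀ F G : Dual ℝ (Dual ℝ A), arens1 A F G = arens2 A F G)
    (D : A →L[ℝ] Dual ℝ X)
    (hD : ∀ a b : A, D (a * b) = dMap (r a) (D b) + dMap (l b) (D a))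
    (hsurj : Function.Surjective D) :
    (∀ F G : Dual ℝ (Dual ℝ A),
      ddMap D (arens1 A F G) =
        dMap ((arensExt r.flip).flip F) (ddMap D G) + dMap (arensExt l G) (ddMap D F)) ↔
    (∀ x'' : Dual ℝ (Dual ℝ X),
      WstarToWeakContinuous fun F : Dual ℝ (Dual ℝ A) => arensExt r.flip x'' F) :=
  bidual_derivation_iff_wstarw_general l r D hD hsurj
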